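/- arXiv:2301.03279 — 9 statements merged into one kernel-verified Lean document; each statement's English description precedes it below -/
import Mathlib

section
/- For all integers k ≥ 2, λ ≥ 1 and m > k, for every deterministic distributed mechanism f_over-of-f_in whose (possibly cardinal) in-district rule f_in is unanimous and whose over-districts rule f_over always outputs one of the district representatives, and for every real c < (k-1)·m/2, there exists a unit-sum instance with m alternatives and k symmetric districts of λ agents each on which max_{a∈A} SW(a) / SW(winner) > c. In particular, the distortion of every such mechanism is Ω(km). -/
/-!
Unanimity lets us dictate the district representatives: feed the mechanism a profile in which
district `d` unanimously ranks `top d` first, for `k` distinct alternatives `top d`, and let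
`top d₀` be the alternative the over-districts rule then picks. Fix a further alternative
`star`. In district `d₀` the agents are nearly indifferent, with `top d₀` barely ahead of
`star` and `star` barely ahead of everything else; in every other district `d` they split almost
evenly between `top d` and `star`. All agents of a district share one valuation, so the winner
`top d₀` gets welfare about `λ/m` while `star`, the welfare maximiser, gets about `λ(k - 1)/2`.
With the gap `t = 1/(k m²)` the ratio is at least `(k - 1) m / 2`.
-/

open Finset

namespace DistributedDistortion

lemma sum_pi_single_comp_le {ι α : Type*} [Fintype ι] [DecidableEq α] {f : ι → α}
    (hf : f.Injective) {x : ℝ} (hx : 0 ≤ x) (b : α) :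
    ∑ i, (Pi.single (f i) x : α → ℝ) b ≤ x := by
  by_cases hb : ∃ j, f j = b
  · obtain ⟨j, rfl⟩ := hb
    rw [sum_eq_single j (fun i _ hij => Pi.single_eq_of_ne (hf.ne hij.symm) _) (by simp)]
    simp
  · push Not at hb
    simp [fun i => (hb i).symm, hx]

section HardInstance

variable {ι α : Type*} [DecidableEq ι] [Fintype α] [DecidableEq α]

variable (top : ι → α) (star : α) (d₀ : ι) (t : ℝ)

noncomputable def hardValuation (d : ι) : α → ℝ :=
  if d = d₀ then
    Function.const α ((1 - 3 * t) / Fintype.card α) + Pi.single star t +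
      Pi.single (top d₀) (2 * t)
  else Pi.single (top d) ((1 + t) / 2) + Pi.single star ((1 - t) / 2)

variable {top star d₀ t}

lemma hardValuation_nonneg (ht₀ : 0 ≤ t) (ht : t ≤ 1 / 3) (d : ι) (b : α) :
    0 ≤ hardValuation top star d₀ t d b := by
  have : 0 ≤ (1 - 3 * t) / Fintype.card α := div_nonneg (by linarith) (Nat.cast_nonneg _)
  unfold hardValuation
  split_ifs <;> simp only [Pi.add_apply, Function.const_apply, Pi.single_apply] <;>
    split_ifs <;> linarith

lemma sum_hardValuation_apply (d : ι) : ∑ b, hardValuation top star d₀ t d b = 1 := by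
  have : (Fintype.card α : ℝ) ≠ 0 := Nat.cast_ne_zero.mpr (Fintype.card_pos_iff.mpr ⟨star⟩).ne'
  unfold hardValuation
  split_ifs
  · simp only [Pi.add_apply, Function.const_apply, sum_add_distrib, sum_const, card_univ,
      sum_pi_single', mem_univ, if_true, nsmul_eq_mul]
    field_simp
    ring
  · simp only [Pi.add_apply, sum_add_distrib, sum_pi_single', mem_univ, if_true]
    ring

lemma hardValuation_lt_top (hstar : ∀ d, top d ≠ star) (ht : 0 < t) {d : ι} {b : α}
    (hb : b ≠ top d) : hardValuation top star d₀ t d b < hardValuation top star d₀ t d (top d) := by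
  unfold hardValuation
  split_ifs with hd
  · subst hd
    simp only [Pi.add_apply, Function.const_apply, Pi.single_apply, hb, hstar d, if_true,
      if_false]
    split_ifs <;> linarith
  · simp only [Pi.add_apply, Pi.single_apply, hb, hstar d, if_true, if_false]
    split_ifs <;> linarith

variable [Fintype ι]

lemma sum_hardValuation_eq (b : α) :
    ∑ d, hardValuation top star d₀ t d b = hardValuation top star d₀ t d₀ b +
      ∑ d ∈ {d₀}ᶜ, (Pi.single (top d) ((1 + t) / 2) + Pi.single star ((1 - t) / 2) : α → ℝ) b := by
  rw [Fintype.sum_eq_add_sum_compl d₀]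
  congr 1
  refine sum_congr rfl fun d hd => ?_
  rw [hardValuation, if_neg (by simpa using hd)]

lemma sum_hardValuation_star (hstar : ∀ d, top d ≠ star) :
    ∑ d, hardValuation top star d₀ t d star =
      (1 - 3 * t) / Fintype.card α + t + (Fintype.card ι - 1) * ((1 - t) / 2) := by
  rw [sum_hardValuation_eq]
  simp [hardValuation, (hstar _).symm, card_compl, Nat.cast_pred (Fintype.card_pos_iff.mpr ⟨d₀⟩)]

lemma sum_hardValuation_top (htop : top.Injective) (hstar : ∀ d, top d ≠ star) :
    ∑ d, hardValuation top star d₀ t d (top d₀) = (1 - 3 * t) / Fintype.card α + 2 * t := by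
  rw [sum_hardValuation_eq]
  simp [hardValuation, Pi.single_apply, hstar, htop.eq_iff]

lemma sum_hardValuation_le (htop : top.Injective) (ht : 0 ≤ t) {b : α} (hbs : b ≠ star)
    (hbt : b ≠ top d₀) :
    ∑ d, hardValuation top star d₀ t d b ≤ (1 - 3 * t) / Fintype.card α + (1 + t) / 2 := by
  rw [sum_hardValuation_eq]
  simp only [hardValuation, if_true, Pi.add_apply, Function.const_apply, Pi.single_eq_of_ne hbs,
    Pi.single_eq_of_ne hbt, add_zero]
  gcongr
  have hx : 0 ≤ (1 + t) / 2 := by linarith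
  refine (sum_le_univ_sum_of_nonneg fun d => ?_).trans (sum_pi_single_comp_le htop hx b)
  rw [Pi.single_apply]
  exact ite_nonneg hx le_rfl

lemma sum_hardValuation_le_star (htop : top.Injective) (hstar : ∀ d, top d ≠ star)
    (hι : 2 ≤ Fintype.card ι) (ht₀ : 0 ≤ t) (ht : t ≤ 1 / 3) (b : α) :
    ∑ d, hardValuation top star d₀ t d b ≤ ∑ d, hardValuation top star d₀ t d star := by
  have hK : (2 : ℝ) ≤ Fintype.card ι := by exact_mod_cast hι
  have hgap : (1 - t) / 2 ≤ (Fintype.card ι - 1) * ((1 - t) / 2) :=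
    le_mul_of_one_le_left (by linarith) (by linarith)
  by_cases hbs : b = star
  · rw [hbs]
  by_cases hbt : b = top d₀
  · rw [hbt, sum_hardValuation_top htop hstar, sum_hardValuation_star hstar]
    linarith
  · refine (sum_hardValuation_le htop ht₀ hbs hbt).trans ?_
    rw [sum_hardValuation_star hstar]
    linarith

lemma lt_sum_hardValuation_star_div_top (htop : top.Injective) (hstar : ∀ d, top d ≠ star)
    (hα : 3 ≤ Fintype.card α) (ht₀ : 0 ≤ t)
    (ht : (Fintype.card ι - 1) * (Fintype.card α - 1) * Fintype.card α * t ≤ 1) {c : ℝ}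
    (hc : c < (Fintype.card ι - 1) * Fintype.card α / 2) :
    c < (∑ d, hardValuation top star d₀ t d star) /
      ∑ d, hardValuation top star d₀ t d (top d₀) := by
  rw [sum_hardValuation_top htop hstar, sum_hardValuation_star hstar]
  have hM : (3 : ℝ) ≤ Fintype.card α := by exact_mod_cast hα
  set K : ℝ := (Fintype.card ι : ℝ)
  set M : ℝ := (Fintype.card α : ℝ)
  have hpos : 0 < (1 - 3 * t) / M + 2 * t := by
    rw [show (1 - 3 * t) / M + 2 * t = (1 + (2 * M - 3) * t) / M by field_simp; ring]
    exact div_pos (by nlinarith) (by positivity)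
  have hslack : (1 - 3 * t) / M + t + (K - 1) * ((1 - t) / 2) -
      (K - 1) * M / 2 * ((1 - 3 * t) / M + 2 * t) =
      (1 - (K - 1) * (M - 1) * M * t + (M - 3) * t) / M := by
    field_simp
    ring
  have hle : (K - 1) * M / 2 * ((1 - 3 * t) / M + 2 * t) ≤
      (1 - 3 * t) / M + t + (K - 1) * ((1 - t) / 2) := by
    rw [← sub_nonneg, hslack]
    exact div_nonneg (by nlinarith) (by positivity)
  rw [lt_div_iff₀ hpos]
  exact (mul_lt_mul_of_pos_right hc hpos).trans_le hle

end HardInstance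

lemma gap_bounds {K M : ℝ} (hK : 2 ≤ K) (hM : 3 ≤ M) :
    0 < 1 / (K * M * M) ∧ 1 / (K * M * M) ≤ 1 / 3 ∧
      (K - 1) * (M - 1) * M * (1 / (K * M * M)) ≤ 1 := by
  have hKM : 6 ≤ K * M := by nlinarith
  refine ⟨by positivity, ?_, ?_⟩
  · rw [div_le_div_iff₀ (by positivity) (by norm_num)]
    nlinarith
  · rw [show (K - 1) * (M - 1) * M * (1 / (K * M * M)) = (K - 1) * (M - 1) / (K * M) by
      field_simp, div_le_one (by positivity)]
    nlinarith

lemma sum_sum_const_agents {ι α : Type*} [Fintype ι] (lam : ℕ) (u : ι → α → ℝ) (b : α) :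
    ∑ d, ∑ _i : Fin lam, u d b = lam * ∑ d, u d b := by
  simp [mul_sum]

end DistributedDistortion

open DistributedDistortion

theorem stmt0
    (k lam m : ℕ) (hk : 2 ≤ k) (hlam : 1 ≤ lam) (hm : k < m)
    (fin : (Fin lam → Fin m → ℝ) → Fin m)
    (fover : (Fin k → Fin m) → Fin m)
    (hfin_unanimous : ∀ (P : Fin lam → Fin m → ℝ) (a : Fin m),
      (∀ (i : Fin lam) (b : Fin m), b ≠ a → P i b < P i a) → fin P = a)
    (hfover_rep : ∀ reps : Fin k → Fin m, ∃ d : Fin k, fover reps = reps d)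
    (c : ℝ) (hc : c < ((k : ℝ) - 1) * m / 2) :
    ∃ v : Fin k → Fin lam → Fin m → ℝ,
      (∀ d i a, 0 ≤ v d i a) ∧
      (∀ d i, ∑ a, v d i a = 1) ∧
      ∃ a : Fin m,
        (∀ b : Fin m, (∑ d, ∑ i, v d i b) ≤ (∑ d, ∑ i, v d i a)) ∧
        c < (∑ d, ∑ i, v d i a) /
            (∑ d, ∑ i, v d i (fover fun d' => fin (v d'))) := by
  let top : Fin k → Fin m := Fin.castLE hm.le
  let star : Fin m := ⟨k, hm⟩
  have htop : top.Injective := Fin.castLE_injective hm.le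
  have hstar (d : Fin k) : top d ≠ star := Fin.ne_of_lt d.isLt
  obtain ⟨d₀, hd₀⟩ := hfover_rep top
  obtain ⟨ht₀, ht, ht'⟩ := gap_bounds (K := k) (M := m) (by exact_mod_cast hk)
    (by exact_mod_cast (by omega : 3 ≤ m))
  set t : ℝ := 1 / (k * m * m)
  set u := hardValuation top star d₀ t
  have hreps : (fun d => fin fun _ => u d) = top :=
    funext fun d => hfin_unanimous _ _ fun _ _ hb => hardValuation_lt_top hstar ht₀ hb
  have hlam₀ : (lam : ℝ) ≠ 0 := Nat.cast_ne_zero.mpr (by omega)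
  refine ⟨fun d _ => u d, fun d _ => hardValuation_nonneg ht₀.le ht d,
    fun d _ => sum_hardValuation_apply d, star, fun b => ?_, ?_⟩
  · simp only [sum_sum_const_agents]
    exact mul_le_mul_of_nonneg_left
      (sum_hardValuation_le_star htop hstar (by simpa using hk) ht₀.le ht b) (Nat.cast_nonneg _)
  · rw [hreps, hd₀]
    simp only [sum_sum_const_agents, mul_div_mul_left _ _ hlam₀]
    exact lt_sum_hardValuation_star_div_top htop hstar (by simp; omega) ht₀.le
      (by simpa using ht') (by simpa using hc)
end

section
/- Let f_in be a deterministic ordinal in-district rule and suppose that on some district ordinal profile P (a profile of rankings for λ agents over m alternatives), f_in selects an alternative x that is not ranked first by any agent in P. Then for every deterministic distributed mechanism using f_in and any over-districts rule f_over that outputs one of the district representatives, and for every M > 0, there exists a unit-sum instance (consisting of k identical copies of the district P, with valuations consistent with the rankings in P) on which the winner is x, SW(x) = 0, and max_{a∈A} SW(a) > 0; hence the distortion of the mechanism is infinite. -/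
/-!
Give every agent all of its utility on its top-ranked alternative. This valuation is unit-sum and
consistent with the ranking. Since `x` is nobody's top choice, `SW(x) = 0`, whereas the top choice
of any single agent has positive welfare. All `k` districts are copies of `P`, so each elects `x`,
and an over-districts rule that returns some representative must return `x`.
-/

open Finset

section TopValuation

variable {α : Type*} [DecidableEq α] {m : ℕ} [NeZero m] (σ : α ≃ Fin m)

def topValuation : α → ℝ := Pi.single (σ.symm 0) 1

lemma topValuation_nonneg (a : α) : 0 ≤ topValuation σ a := by
  unfold topValuation
  rcases eq_or_ne a (σ.symm 0) with rfl | h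
  · simp
  · simp [h]

lemma topValuation_symm_zero : topValuation σ (σ.symm 0) = 1 := Pi.single_eq_same _ _

lemma topValuation_eq_zero_of_lt {a b : α} (h : σ b < σ a) : topValuation σ a = 0 := by
  have hne : a ≠ σ.symm 0 := by
    rintro rfl
    simp at h
  exact Pi.single_eq_of_ne hne _

lemma topValuation_le_of_lt {a b : α} (h : σ a < σ b) : topValuation σ b ≤ topValuation σ a := by
  rw [topValuation_eq_zero_of_lt σ h]
  exact topValuation_nonneg σ a

lemma sum_topValuation [Fintype α] : ∑ a, topValuation σ a = 1 := by
  simp [topValuation]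

end TopValuation

lemma apply_const_of_forall_exists_eq_apply {ι β : Type*} {f : (ι → β) → β}
    (hf : ∀ reps : ι → β, ∃ d, f reps = reps d) (b : β) : f (fun _ => b) = b :=
  (hf _).choose_spec

theorem stmt1_general
    (k lam m : ℕ) (hk : 1 ≤ k) (hlam : 1 ≤ lam)
    (fin : (Fin lam → (Fin m ≃ Fin m)) → Fin m)
    (fover : (Fin k → Fin m) → Fin m)
    (hfover_rep : ∀ reps : Fin k → Fin m, ∃ d : Fin k, fover reps = reps d)
    (P : Fin lam → (Fin m ≃ Fin m)) (x : Fin m)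
    (hx : fin P = x)
    (hnotop : ∀ i : Fin lam, ∃ b : Fin m, P i b < P i x) :
    ∃ u : Fin lam → Fin m → ℝ,
      (∀ i a, 0 ≤ u i a) ∧
      (∀ i, ∑ a, u i a = 1) ∧
      (∀ (i : Fin lam) (a b : Fin m), P i a < P i b → u i b ≤ u i a) ∧
      fover (fun _ : Fin k => fin P) = x ∧
      (∑ _d : Fin k, ∑ i, u i x) = 0 ∧
      (∃ a : Fin m, 0 < ∑ _d : Fin k, ∑ i, u i a) := by
  have : NeZero m := ⟨x.pos.ne'⟩
  have : NeZero k := ⟨by omega⟩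
  have : NeZero lam := ⟨by omega⟩
  refine ⟨fun i => topValuation (P i), fun _ => topValuation_nonneg _, fun _ => sum_topValuation _,
    fun _ _ _ => topValuation_le_of_lt _, ?_, ?_, ⟨(P 0).symm 0, ?_⟩⟩
  · rw [apply_const_of_forall_exists_eq_apply hfover_rep, hx]
  · refine sum_eq_zero fun _ _ => sum_eq_zero fun i _ => ?_
    obtain ⟨b, hb⟩ := hnotop i
    exact topValuation_eq_zero_of_lt _ hb
  · refine sum_pos (fun _ _ => sum_pos' (fun i _ => topValuation_nonneg _ _) ?_) univ_nonempty
    exact ⟨0, mem_univ _, (topValuation_symm_zero (P 0)).ge.trans_lt' one_pos⟩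

theorem stmt1
    (k lam m : ℕ) (hk : 1 ≤ k) (hlam : 1 ≤ lam) (hm : 2 ≤ m)
    (fin : (Fin lam → (Fin m ≃ Fin m)) → Fin m)
    (fover : (Fin k → Fin m) → Fin m)
    (hfover_rep : ∀ reps : Fin k → Fin m, ∃ d : Fin k, fover reps = reps d)
    (P : Fin lam → (Fin m ≃ Fin m)) (x : Fin m)
    (hx : fin P = x)
    (hnotop : ∀ i : Fin lam, ∃ b : Fin m, P i b < P i x)
    (M : ℝ) (hM : 0 < M) :
    ∃ u : Fin lam → Fin m → ℝ,
      (∀ i a, 0 ≤ u i a) ∧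
      (∀ i, ∑ a, u i a = 1) ∧
      (∀ (i : Fin lam) (a b : Fin m), P i a < P i b → u i b ≤ u i a) ∧
      fover (fun _ : Fin k => fin P) = x ∧
      (∑ _d : Fin k, ∑ i, u i x) = 0 ∧
      (∃ a : Fin m, 0 < ∑ _d : Fin k, ∑ i, u i a) :=
  stmt1_general k lam m hk hlam fin fover hfover_rep P x hx hnotop
end

section
/- Let k ≥ 2, let m be even with 2λ/m a positive integer, and let M be a deterministic ordinal distributed mechanism on instances with k symmetric districts of λ agents and alternative set A of size m. Let y_1, …, y_k ∈ A be distinct and let x ∈ A \ {y_1, …, y_k}. Suppose the over-districts rule of M selects y_1 whenever the tuple of district representatives is (y_1, …, y_k), and suppose there exists a divided district ordinal profile on which the in-district rule of M selects y_1. Then either M has infinite distortion, or there exists a unit-sum instance (consisting of that divided district together with k-1 districts in which all agents rank y_ℓ first and x second, for ℓ = 2, …, k) on which max_{a∈A} SW(a) / SW(winner) ≥ (k-1)·m²/4; in particular the distortion of M is Ω(k m²). -/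
/-!
Give every district other than the first the unanimous ranking "`y_ℓ` first, `x` second". If one
of them does not elect `y_ℓ`, copying it into every district makes the winner an alternative that
nobody ranks first, and point-mass valuations on the top choices give the winner welfare `0`.
Otherwise the representatives are `(y_1, …, y_k)` and `y_1` wins. If `y_1` is nobody's top in the
divided district, point masses again give it welfare `0`. If it is the top of one group of `2λ/m`
agents, let that group value all alternatives `1/m`, let the other agents of the divided district
put all their weight on their top, and let the other districts split `1/2 – 1/2` between `y_ℓ` and
`x`: then `SW(y_1) = 2λ/m²` while `SW(x) ≥ (k-1)λ/2`.
-/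

open Finset Function

section Valuation

variable {α P : Type*} [Preorder P]

lemma not_lt_of_ranks_first {σ : α → P} {t : α} (ht : ∀ b, b ≠ t → σ t < σ b) (a : α) :
    ¬ σ a < σ t := by
  intro hat
  by_cases ha : a = t
  · exact lt_irrefl _ (ha ▸ hat)
  · exact lt_asymm hat (ht a ha)

variable [Fintype α]

structure IsConsistentValuation (σ : α → P) (v : α → ℝ) : Prop where
  nonneg : 0 ≤ v
  sum_eq_one : ∑ a, v a = 1
  le_of_lt : ∀ a b, σ a < σ b → v b ≤ v a

lemma isConsistentValuation_uniform [Nonempty α] (σ : α → P) :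
    IsConsistentValuation σ fun _ => (Fintype.card α : ℝ)⁻¹ where
  nonneg _ := by positivity
  sum_eq_one := by simp
  le_of_lt _ _ _ := le_rfl

variable [DecidableEq α]

lemma isConsistentValuation_single {σ : α → P} {t : α} (ht : ∀ b, b ≠ t → σ t < σ b) :
    IsConsistentValuation σ (Pi.single t 1 : α → ℝ) := by
  have nonneg : 0 ≤ (Pi.single t 1 : α → ℝ) := Pi.single_nonneg.2 zero_le_one
  refine ⟨nonneg, by simp, fun a b hab => ?_⟩
  have hb : b ≠ t := fun hb => not_lt_of_ranks_first ht a (hb ▸ hab)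
  simpa [hb] using nonneg a

lemma isConsistentValuation_half_add_half {σ : α → P} {y x : α} (hyx : y ≠ x)
    (hy : ∀ b, b ≠ y → σ y < σ b) (hx : ∀ b, b ≠ y → b ≠ x → σ x < σ b) :
    IsConsistentValuation σ (Pi.single y (1 / 2) + Pi.single x (1 / 2) : α → ℝ) := by
  have nonneg : 0 ≤ (Pi.single y (1 / 2) + Pi.single x (1 / 2) : α → ℝ) :=
    add_nonneg (Pi.single_nonneg.2 (by norm_num)) (Pi.single_nonneg.2 (by norm_num))
  refine ⟨nonneg, by simp [sum_add_distrib]; norm_num, fun a b hab => ?_⟩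
  have hby : b ≠ y := fun hb => not_lt_of_ranks_first hy a (hb ▸ hab)
  by_cases hbx : b = x
  · subst hbx
    have hay : a = y := by
      by_contra hay
      by_cases hax : a = b
      · exact lt_irrefl _ (hax ▸ hab)
      · exact lt_asymm hab (hx a hay hax)
    simp [hay, hyx, hyx.symm]
  · simpa [hby, hbx] using nonneg a

end Valuation

lemma Fin.exists_perm_ranks_first_second {n : ℕ} {y x : Fin n} (hyx : y ≠ x) :
    ∃ π : Equiv.Perm (Fin n), (∀ b, b ≠ y → π y < π b) ∧ (∀ b, b ≠ y → b ≠ x → π x < π b) := by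
  have hn : 2 ≤ n := by have := Fin.val_ne_of_ne hyx; omega
  let z₀ : Fin n := ⟨0, by omega⟩
  let z₁ : Fin n := ⟨1, by omega⟩
  let π := (Equiv.swap y z₀).trans (Equiv.swap (Equiv.swap y z₀ x) z₁)
  have hπx : π x = z₁ := by simp [π]
  have hπy : π y = z₀ := by
    have h₀ : Equiv.swap y z₀ x ≠ Equiv.swap y z₀ y := (Equiv.swap y z₀).injective.ne hyx.symm
    rw [Equiv.swap_apply_left] at h₀
    simp [π, Equiv.swap_apply_of_ne_of_ne h₀.symm (show z₀ ≠ z₁ by simp [z₀, z₁, Fin.ext_iff])]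
  refine ⟨π, fun b hb => ?_, fun b hby hbx => ?_⟩
  · have := Fin.val_ne_of_ne (π.injective.ne hb)
    rw [hπy] at this ⊢
    exact Fin.lt_def.2 (by simp [z₀] at this ⊢; omega)
  · have h₀ := Fin.val_ne_of_ne (π.injective.ne hby)
    have h₁ := Fin.val_ne_of_ne (π.injective.ne hbx)
    rw [hπy] at h₀
    rw [hπx] at h₁ ⊢
    exact Fin.lt_def.2 (by simp [z₀, z₁] at h₀ h₁ ⊢; omega)

section Welfare

variable {δ ι α P : Type*} [Fintype δ] [Fintype ι]

def welfare (v : δ → ι → α → ℝ) (a : α) : ℝ := ∑ d, ∑ i, v d i a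

lemma le_welfare {v : δ → ι → α → ℝ} {a : α} (hv : ∀ d i, 0 ≤ v d i a) (d : δ) (i : ι) :
    v d i a ≤ welfare v a :=
  (single_le_sum (fun i _ => hv d i) (mem_univ i)).trans
    (single_le_sum (fun d _ => sum_nonneg fun i _ => hv d i) (mem_univ d))

lemma welfare_ge_of_forall_ne [DecidableEq δ] {v : δ → ι → α → ℝ} {a : α} {c : ℝ}
    (hv : ∀ d i, 0 ≤ v d i a) (d₀ : δ) (hc : ∀ d, d ≠ d₀ → ∀ i, v d i a = c) :
    ((Fintype.card δ : ℝ) - 1) * Fintype.card ι * c ≤ welfare v a := by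
  rw [welfare, Fintype.sum_eq_add_sum_compl d₀]
  have hrest : ∑ d ∈ {d₀}ᶜ, ∑ i, v d i a = ((Fintype.card δ : ℝ) - 1) * Fintype.card ι * c := by
    rw [sum_congr rfl fun d hd => sum_congr rfl fun i _ => hc d (by simpa using hd) i]
    simp [card_compl, Nat.cast_sub (Fintype.card_pos_iff.2 ⟨d₀⟩)]
    ring
  linarith [sum_nonneg fun i (_ : i ∈ univ) => hv d₀ i]

variable [Fintype α] [Preorder P]

def HasInfiniteDistortion (M : (δ → ι → α ≃ P) → α) : Prop :=
  ∃ (σ : δ → ι → α ≃ P) (v : δ → ι → α → ℝ),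
    (∀ d i a, 0 ≤ v d i a) ∧ (∀ d i, ∑ a, v d i a = 1) ∧
    (∀ d i a b, σ d i a < σ d i b → v d i b ≤ v d i a) ∧
    welfare v (M σ) = 0 ∧ ∃ a, 0 < welfare v a

variable [DecidableEq α]

lemma hasInfiniteDistortion_of_winner_ne_top [Nonempty δ] [Nonempty ι]
    (M : (δ → ι → α ≃ P) → α) (σ : δ → ι → α ≃ P) (τ : δ → ι → α)
    (hτ : ∀ d i b, b ≠ τ d i → σ d i (τ d i) < σ d i b) (hM : ∀ d i, τ d i ≠ M σ) :
    HasInfiniteDistortion M := by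
  have hv d i := isConsistentValuation_single (hτ d i)
  obtain ⟨d⟩ := ‹Nonempty δ›
  obtain ⟨i⟩ := ‹Nonempty ι›
  refine ⟨σ, fun d i => Pi.single (τ d i) 1, fun d i => (hv d i).nonneg,
    fun d i => (hv d i).sum_eq_one, fun d i => (hv d i).le_of_lt, ?_, τ d i, ?_⟩
  · simp [welfare, Pi.single_eq_of_ne (hM _ _).symm]
  · refine lt_of_lt_of_le ?_ (le_welfare (a := τ d i) (fun d i => (hv d i).nonneg _) d i)
    simp

lemma hasInfiniteDistortion_of_unanimous_rep_ne_top [Nonempty δ] [Nonempty ι]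
    (fin : (ι → α ≃ P) → α) (fover : (δ → α) → α) (hfover : ∀ reps, ∃ d, fover reps = reps d)
    {π : α ≃ P} {t : α} (ht : ∀ b, b ≠ t → π t < π b) (hfin : fin (fun _ => π) ≠ t) :
    HasInfiniteDistortion fun σ : δ → ι → α ≃ P => fover fun d => fin (σ d) := by
  refine hasInfiniteDistortion_of_winner_ne_top _ (fun _ _ => π) (fun _ _ => t)
    (fun _ _ => ht) fun _ _ => ?_
  obtain ⟨d, hd⟩ := hfover fun _ => fin fun _ => π
  simpa [hd] using hfin.symm

lemma hasInfiniteDistortion_of_winner_ne_tops [DecidableEq δ] [Nonempty ι] {G S : Type*}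
    {e : ι ≃ G × S} {tops : G → α} {d₀ : δ} {y : δ → α} {Q : ι → α ≃ P}
    (hQ : ∀ i b, b ≠ tops (e i).1 → Q i (tops (e i).1) < Q i b) {π : δ → α ≃ P}
    (hπy : ∀ d b, b ≠ y d → π d (y d) < π d b) (M : (δ → ι → α ≃ P) → α)
    (htops : ∀ i, tops (e i).1 ≠ M (update (fun d _ => π d) d₀ Q))
    (hy : ∀ d, d ≠ d₀ → y d ≠ M (update (fun d _ => π d) d₀ Q)) :
    HasInfiniteDistortion M := by
  have : Nonempty δ := ⟨d₀⟩
  refine hasInfiniteDistortion_of_winner_ne_top M (update (fun d _ => π d) d₀ Q)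
    (update (fun d _ => y d) d₀ fun i => tops (e i).1) (fun d i => ?_) fun d i => ?_ <;>
  rcases eq_or_ne d d₀ with rfl | hd
  · simpa using hQ i
  · simpa [hd] using hπy d
  · simpa using htops i
  · simpa [hd] using hy d hd

end Welfare

noncomputable def lowerBoundValuation {δ ι G S α : Type*} [DecidableEq δ] [DecidableEq G]
    [Fintype α] [DecidableEq α] (e : ι ≃ G × S) (tops : G → α) (t₀ : G) (d₀ : δ) (y : δ → α)
    (x : α) : δ → ι → α → ℝ :=
  update (fun d _ => Pi.single (y d) (1 / 2) + Pi.single x (1 / 2)) d₀ fun i =>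
    if (e i).1 = t₀ then fun _ => (Fintype.card α : ℝ)⁻¹ else Pi.single (tops (e i).1) 1

section LowerBound

variable {δ ι G S α P : Type*} [DecidableEq δ] [DecidableEq G] [Fintype α] [DecidableEq α]
  {e : ι ≃ G × S} {tops : G → α} {t₀ : G} {d₀ : δ} {y : δ → α} {x : α}

lemma isConsistentValuation_lowerBoundValuation [Preorder P] {Q : ι → α ≃ P}
    (hQ : ∀ i b, b ≠ tops (e i).1 → Q i (tops (e i).1) < Q i b) {π : δ → α ≃ P}
    (hπy : ∀ d b, b ≠ y d → π d (y d) < π d b) (hπx : ∀ d b, b ≠ y d → b ≠ x → π d x < π d b)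
    (hx : ∀ d, x ≠ y d) (d : δ) (i : ι) :
    IsConsistentValuation (update (fun d _ => π d) d₀ Q d i)
      (lowerBoundValuation e tops t₀ d₀ y x d i) := by
  have : Nonempty α := ⟨x⟩
  rcases eq_or_ne d d₀ with rfl | hd
  · simp only [lowerBoundValuation, update_self]
    split_ifs
    · exact isConsistentValuation_uniform _
    · exact isConsistentValuation_single (hQ i)
  · simp only [lowerBoundValuation, update_of_ne hd]
    exact isConsistentValuation_half_add_half (hx d).symm (hπy d) (hπx d)

variable [Fintype δ] [Fintype ι]

lemma welfare_lowerBoundValuation_top [Fintype G] [Fintype S] (htops : Injective tops)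
    (hy : ∀ d, d ≠ d₀ → tops t₀ ≠ y d) (hx : tops t₀ ≠ x) :
    welfare (lowerBoundValuation e tops t₀ d₀ y x) (tops t₀) = Fintype.card S / Fintype.card α := by
  rw [welfare, Fintype.sum_eq_single d₀ fun d hd => by
    simp [lowerBoundValuation, update_of_ne hd, hy d hd, hx]]
  rw [Fintype.sum_equiv e _ (fun p => if p.1 = t₀ then (Fintype.card α : ℝ)⁻¹ else 0) fun i => by
    by_cases hi : (e i).1 = t₀ <;> simp [lowerBoundValuation, hi, htops.ne]]
  rw [Fintype.sum_prod_type, Fintype.sum_eq_single t₀ fun g hg => by simp [hg]]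
  simp [div_eq_mul_inv]

lemma exists_welfare_div_welfare_top_ge [Fintype G] [Fintype S] [Nonempty S] [Preorder P]
    {Q : ι → α ≃ P} (hQ : ∀ i b, b ≠ tops (e i).1 → Q i (tops (e i).1) < Q i b)
    {π : δ → α ≃ P} (hπy : ∀ d b, b ≠ y d → π d (y d) < π d b)
    (hπx : ∀ d b, b ≠ y d → b ≠ x → π d x < π d b) (hx : ∀ d, x ≠ y d)
    (htops : Injective tops) (hy : ∀ d, d ≠ d₀ → tops t₀ ≠ y d) (htx : tops t₀ ≠ x) :
    ∃ v : δ → ι → α → ℝ,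
      (∀ d i, IsConsistentValuation (update (fun d _ => π d) d₀ Q d i) (v d i)) ∧
      ∃ a, (∀ b, welfare v b ≤ welfare v a) ∧
        ((Fintype.card δ : ℝ) - 1) * Fintype.card G * Fintype.card α / 2 ≤
          welfare v a / welfare v (tops t₀) := by
  set v := lowerBoundValuation e tops t₀ d₀ y x
  have hv := isConsistentValuation_lowerBoundValuation (t₀ := t₀) (d₀ := d₀) hQ hπy hπx hx
  have : Nonempty α := ⟨x⟩
  obtain ⟨a, ha⟩ := Finite.exists_max (welfare v)
  refine ⟨v, hv, a, ha, ?_⟩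
  have hx_ge : ((Fintype.card δ : ℝ) - 1) * Fintype.card ι * (1 / 2) ≤ welfare v x :=
    welfare_ge_of_forall_ne (fun d i => (hv d i).nonneg x) d₀ fun d hd i => by
      simp [v, lowerBoundValuation, update_of_ne hd, hx d]
  rw [welfare_lowerBoundValuation_top htops hy htx, le_div_iff₀ (by positivity)]
  rw [Fintype.card_congr e, Fintype.card_prod, Nat.cast_mul] at hx_ge
  have hscale : ((Fintype.card δ : ℝ) - 1) * Fintype.card G * Fintype.card α / 2 *
      (Fintype.card S / Fintype.card α) =
      ((Fintype.card δ : ℝ) - 1) * (Fintype.card G * Fintype.card S) * (1 / 2) := by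
    field_simp
  linarith [ha x]

end LowerBound

theorem stmt2
    (k h s : ℕ) (hk : 2 ≤ k) (hh : 1 ≤ h) (hs : 1 ≤ s)
    (fin : (Fin (h * s) → (Fin (2 * h) ≃ Fin (2 * h))) → Fin (2 * h))
    (fover : (Fin k → Fin (2 * h)) → Fin (2 * h))
    (hfover_rep : ∀ reps, ∃ d, fover reps = reps d)
    (y : Fin k → Fin (2 * h)) (hy : Function.Injective y)
    (x : Fin (2 * h)) (hx : ∀ d, x ≠ y d)
    (hwin : fover y = y ⟨0, by omega⟩)
    -- a divided district profile Q represented by y_1: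
    (Q : Fin (h * s) → (Fin (2 * h) ≃ Fin (2 * h)))
    (tops : Fin h → Fin (2 * h)) (htops : Function.Injective tops)
    (e : Fin (h * s) ≃ Fin h × Fin s)
    (hdivided : ∀ (i : Fin (h * s)) (b : Fin (2 * h)),
        b ≠ tops (e i).1 → Q i (tops (e i).1) < Q i b)
    (hQ : fin Q = y ⟨0, by omega⟩) :
    -- either M has infinite distortion:
    (∃ (σ : Fin k → Fin (h * s) → (Fin (2 * h) ≃ Fin (2 * h)))
       (v : Fin k → Fin (h * s) → Fin (2 * h) → ℝ),
        (∀ d i a, 0 ≤ v d i a) ∧ (∀ d i, ∑ a, v d i a = 1) ∧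
        (∀ d i a b, σ d i a < σ d i b → v d i b ≤ v d i a) ∧
        (∑ d, ∑ i, v d i (fover fun d' => fin (σ d'))) = 0 ∧
        (∃ a, 0 < ∑ d, ∑ i, v d i a)) ∨
    -- or there is an instance of the described shape with distortion at least (k-1)·m²/4:
    (∃ (σ : Fin k → Fin (h * s) → (Fin (2 * h) ≃ Fin (2 * h)))
       (v : Fin k → Fin (h * s) → Fin (2 * h) → ℝ),
        σ ⟨0, by omega⟩ = Q ∧
        (∀ d : Fin k, d ≠ ⟨0, by omega⟩ → ∀ i,
          (∀ b, b ≠ y d → σ d i (y d) < σ d i b) ∧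
          (∀ b, b ≠ y d → b ≠ x → σ d i x < σ d i b)) ∧
        (∀ d i a, 0 ≤ v d i a) ∧ (∀ d i, ∑ a, v d i a = 1) ∧
        (∀ d i a b, σ d i a < σ d i b → v d i b ≤ v d i a) ∧
        ∃ a, (∀ b, (∑ d, ∑ i, v d i b) ≤ (∑ d, ∑ i, v d i a)) ∧
          ((k : ℝ) - 1) * (2 * (h : ℝ)) ^ 2 / 4 ≤
            (∑ d, ∑ i, v d i a) /
              (∑ d, ∑ i, v d i (fover fun d' => fin (σ d')))) := by
  set d₀ : Fin k := ⟨0, by omega⟩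
  have : Nonempty (Fin k) := ⟨d₀⟩
  have : Nonempty (Fin s) := ⟨⟨0, hs⟩⟩
  have : Nonempty (Fin (h * s)) := ⟨⟨0, by positivity⟩⟩
  choose π hπy hπx using fun d => Fin.exists_perm_ranks_first_second (hx d).symm
  by_cases hreps : ∀ d, d ≠ d₀ → fin (fun _ => π d) = y d
  swap
  · obtain ⟨d, -, hd⟩ := not_forall₂.mp hreps
    exact .inl (hasInfiniteDistortion_of_unanimous_rep_ne_top fin fover hfover_rep (hπy d) hd)
  set σ := update (fun d _ => π d) d₀ Q
  have hW : (fover fun d => fin (σ d)) = y d₀ := by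
    rw [← hwin]
    congr 1
    funext d
    rcases eq_or_ne d d₀ with rfl | hd
    · simpa [σ] using hQ
    · simpa [σ, hd] using hreps d hd
  by_cases htop : ∃ t₀, tops t₀ = y d₀
  · obtain ⟨t₀, ht₀⟩ := htop
    obtain ⟨v, hv, a, ha, hratio⟩ := exists_welfare_div_welfare_top_ge hdivided hπy hπx hx htops
      (fun d hd => ht₀ ▸ hy.ne hd.symm) (ht₀ ▸ (hx d₀).symm)
    refine .inr ⟨σ, v, update_self .., fun d hd i => ?_, fun d i => (hv d i).nonneg,
      fun d i => (hv d i).sum_eq_one, fun d i => (hv d i).le_of_lt, a, ha, ?_⟩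
    · simpa [σ, hd] using ⟨hπy d, hπx d⟩
    · rw [hW, ← ht₀]
      refine le_of_eq_of_le ?_ hratio
      simp only [Fintype.card_fin, Nat.cast_mul, Nat.cast_ofNat]
      ring
  · refine .inl (hasInfiniteDistortion_of_winner_ne_tops hdivided hπy _
      (fun i hi => htop ⟨_, hi.trans hW⟩) fun d hd hd' => hd (hy (hd'.trans hW)))
end

section
/- Let δ ≥ 1 and consider any instance with k districts (possibly asymmetric). Suppose that for each district d the (possibly random) representative a_d satisfies E[SW_d(a_d)] ≥ (1/δ)·max_{a∈A} SW_d(a), and let the winner w be chosen uniformly at random from the k district representatives (independently across the random choices of representatives). Then E[SW(w)] ≥ (1/(kδ))·max_{a∈A} SW(a); that is, every Uniform-of-δ-Approximate mechanism has distortion at most k·δ. -/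
/-!
Each representative earns, in expectation, a `1/δ` fraction of the best welfare of its own
district, and welfare within one district never exceeds total welfare. Averaging these `k`
inequalities with the uniform weights `1/k`, and using `SW(a) = ∑_d SW_d(a)`, gives the bound.
-/

open Finset

section UniformMixture

variable {ι α : Type*} [Fintype ι] [Fintype α]

theorem sum_const_mul_sum_mul (c : ℝ) (p : ι → α → ℝ) (W : α → ℝ) :
    ∑ b, (c * ∑ d, p d b) * W b = c * ∑ d, ∑ b, p d b * W b := by
  simp only [mul_assoc, sum_mul, ← mul_sum]
  rw [sum_comm]

theorem expected_le_expected_sum_districts (w : ι → α → ℝ) (hw : ∀ d a, 0 ≤ w d a)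
    (p : ι → α → ℝ) (hp : ∀ d a, 0 ≤ p d a) (d : ι) :
    ∑ b, p d b * w d b ≤ ∑ b, p d b * ∑ d', w d' b :=
  sum_le_sum fun b _ => mul_le_mul_of_nonneg_left
    (single_le_sum (f := fun d' => w d' b) (fun d' _ => hw d' b) (mem_univ d)) (hp d b)

/-- `w d a` is the welfare `SW_d(a)` of alternative `a` in district `d`, and `p d` the
distribution of the representative of district `d`. -/
theorem uniform_mixture_approx (w : ι → α → ℝ) (hw : ∀ d a, 0 ≤ w d a)
    (p : ι → α → ℝ) (hp : ∀ d a, 0 ≤ p d a) (δ : ℝ)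
    (happrox : ∀ d a, (1 / δ) * w d a ≤ ∑ b, p d b * w d b) (a : α) :
    (1 / ((Fintype.card ι : ℝ) * δ)) * ∑ d, w d a ≤
      ∑ b, ((1 / (Fintype.card ι : ℝ)) * ∑ d, p d b) * ∑ d', w d' b := by
  have hdistrict : ∀ d, (1 / δ) * w d a ≤ ∑ b, p d b * ∑ d', w d' b := fun d =>
    (happrox d a).trans (expected_le_expected_sum_districts w hw p hp d)
  calc (1 / ((Fintype.card ι : ℝ) * δ)) * ∑ d, w d a
      = (1 / (Fintype.card ι : ℝ)) * ∑ d, (1 / δ) * w d a := by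
        rw [← mul_sum, ← mul_assoc, one_div_mul_one_div]
    _ ≤ (1 / (Fintype.card ι : ℝ)) * ∑ d, ∑ b, p d b * ∑ d', w d' b := by
        gcongr with d
        exact hdistrict d
    _ = ∑ b, ((1 / (Fintype.card ι : ℝ)) * ∑ d, p d b) * ∑ d', w d' b :=
        (sum_const_mul_sum_mul _ p _).symm

end UniformMixture

/-- The distribution of the representative of district `d` is `p d`, so
`Pr[w = b] = (1/k)·∑_d p d b` and `E[SW(w)] = ∑_b (1/k)·(∑_d p d b)·SW(b)`. -/
theorem stmt6_general
    (k m : ℕ)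
    (nd : Fin k → ℕ)
    (v : ∀ d : Fin k, Fin (nd d) → Fin m → ℝ)
    (hv0 : ∀ d i a, 0 ≤ v d i a)
    (δ : ℝ)
    (p : Fin k → Fin m → ℝ)
    (hp0 : ∀ d a, 0 ≤ p d a)
    (happrox : ∀ (d : Fin k) (a : Fin m),
      (1 / δ) * (∑ i, v d i a) ≤ ∑ b, p d b * (∑ i, v d i b)) :
    ∀ a : Fin m,
      (1 / ((k : ℝ) * δ)) * (∑ d, ∑ i, v d i a) ≤
        ∑ b, ((1 / (k : ℝ)) * ∑ d, p d b) * (∑ d', ∑ i, v d' i b) := by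
  intro a
  simpa only [Fintype.card_fin] using uniform_mixture_approx (fun d a => ∑ i, v d i a)
    (fun d a => sum_nonneg fun i _ => hv0 d i a) p hp0 δ happrox a

theorem stmt6
    (k m : ℕ) (hk : 1 ≤ k) (hm : 2 ≤ m)
    (nd : Fin k → ℕ)
    (v : ∀ d : Fin k, Fin (nd d) → Fin m → ℝ)
    (hv0 : ∀ d i a, 0 ≤ v d i a)
    (hv1 : ∀ d i, ∑ a, v d i a = 1)
    (δ : ℝ) (hδ : 1 ≤ δ)
    (p : Fin k → Fin m → ℝ)
    (hp0 : ∀ d a, 0 ≤ p d a) (hp1 : ∀ d, ∑ a, p d a = 1)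
    (happrox : ∀ (d : Fin k) (a : Fin m),
      (1 / δ) * (∑ i, v d i a) ≤ ∑ b, p d b * (∑ i, v d i b)) :
    ∀ a : Fin m,
      (1 / ((k : ℝ) * δ)) * (∑ d, ∑ i, v d i a) ≤
        ∑ b, ((1 / (k : ℝ)) * ∑ d, p d b) * (∑ d', ∑ i, v d' i b) :=
  stmt6_general k m nd v hv0 δ p hp0 happrox
end

section
/- The Uniform-of-Range-Voting mechanism, which selects as the representative of each district d an alternative a_d maximizing SW_d over all alternatives, and then selects the winner uniformly at random from the k district representatives, has distortion at most k: on every unit-sum instance with k (possibly asymmetric) districts, E[SW(w)] ≥ (1/k)·max_{a∈A} SW(a). -/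
open Finset

theorem sum_le_sum_total_of_le_apply {ι α : Type*} [Fintype ι] (w : ι → α → ℝ)
    (hw : ∀ d x, 0 ≤ w d x) (rep : ι → α) (a : α) (hrep : ∀ d, w d a ≤ w d (rep d)) :
    ∑ d, w d a ≤ ∑ d, ∑ d', w d' (rep d) :=
  sum_le_sum fun d _ =>
    (hrep d).trans <| single_le_sum (f := fun d' => w d' (rep d)) (fun d' _ => hw d' _) (mem_univ d)

theorem stmt7_general
    (k m : ℕ)
    (nd : Fin k → ℕ)
    (v : ∀ d : Fin k, Fin (nd d) → Fin m → ℝ)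
    (hv0 : ∀ d i a, 0 ≤ v d i a)
    (rep : Fin k → Fin m)
    (hrep : ∀ (d : Fin k) (a : Fin m), (∑ i, v d i a) ≤ ∑ i, v d i (rep d)) :
    ∀ a : Fin m,
      (1 / (k : ℝ)) * (∑ d, ∑ i, v d i a) ≤
        ∑ d, (1 / (k : ℝ)) * (∑ d', ∑ i, v d' i (rep d)) := by
  intro a
  rw [← mul_sum]
  exact mul_le_mul_of_nonneg_left
    (sum_le_sum_total_of_le_apply (fun d a => ∑ i, v d i a)
      (fun d a => sum_nonneg fun i _ => hv0 d i a) rep a (fun d => hrep d a))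
    (by positivity)

theorem stmt7
    (k m : ℕ) (hk : 1 ≤ k) (hm : 2 ≤ m)
    (nd : Fin k → ℕ)
    (v : ∀ d : Fin k, Fin (nd d) → Fin m → ℝ)
    (hv0 : ∀ d i a, 0 ≤ v d i a)
    (hv1 : ∀ d i, ∑ a, v d i a = 1)
    (rep : Fin k → Fin m)
    (hrep : ∀ (d : Fin k) (a : Fin m), (∑ i, v d i a) ≤ ∑ i, v d i (rep d)) :
    ∀ a : Fin m,
      (1 / (k : ℝ)) * (∑ d, ∑ i, v d i a) ≤
        ∑ d, (1 / (k : ℝ)) * (∑ d', ∑ i, v d' i (rep d)) :=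
  stmt7_general k m nd v hv0 rep hrep
end

section
/- Consider any set of n' agents with unit-sum valuations over m alternatives and preference rankings consistent with the valuations. If alternative a is a plurality winner (an alternative ranked first by at least as many of these agents as any other alternative), then the social welfare of a over these agents is at least n'/m², while the social welfare of any alternative over these agents is at most n'; hence plurality, as a centralized voting rule, has distortion at most m². -/
/-!
Every agent values its top-ranked alternative at least `1/m`, since its `m` values sum to `1`.
A plurality winner is top-ranked by at least `n'/m` agents, so its welfare is at least
`(n'/m) · (1/m)`. Every value is at most `1`, so no alternative has welfare above `n'`.
-/

open Finset

section Valuation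

variable {α : Type*} {v : α → ℝ}

theorem one_div_card_le_of_forall_le [Fintype α] (hv1 : ∑ a, v a = 1) {x : α}
    (hx : ∀ c, v c ≤ v x) :
    1 / (Fintype.card α : ℝ) ≤ v x := by
  have hcard : (0 : ℝ) < Fintype.card α := by exact_mod_cast Fintype.card_pos_iff.mpr ⟨x⟩
  have hsum : (1 : ℝ) ≤ Fintype.card α * v x :=
    calc (1 : ℝ) = ∑ c, v c := hv1.symm
      _ ≤ ∑ _c : α, v x := sum_le_sum fun c _ => hx c
      _ = Fintype.card α * v x := by simp
  rw [div_le_iff₀ hcard]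
  linarith

theorem le_one_of_sum_eq_one [Fintype α] (hv0 : ∀ a, 0 ≤ v a) (hv1 : ∑ a, v a = 1) (b : α) :
    v b ≤ 1 :=
  hv1 ▸ single_le_sum (fun c _ => hv0 c) (mem_univ b)

theorem le_apply_symm_of_isBot {β : Type*} [LinearOrder β] (σ : α ≃ β)
    (hcons : ∀ a b, σ a < σ b → v b ≤ v a) {k : β} (hk : IsBot k) (c : α) :
    v c ≤ v (σ.symm k) := by
  rcases (hk (σ c)).eq_or_lt with h | h
  · rw [h, σ.symm_apply_apply]
  · exact hcons _ _ (by simpa using h)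

end Valuation

theorem card_le_card_mul_card_filter_of_forall_card_filter_le {ι β : Type*} [Fintype ι]
    [Fintype β] [DecidableEq β] (t : ι → β) (a : β)
    (h : ∀ b, #{i | t i = b} ≤ #{i | t i = a}) :
    Fintype.card ι ≤ Fintype.card β * #{i | t i = a} :=
  calc Fintype.card ι = ∑ b, #{i | t i = b} :=
        card_eq_sum_card_fiberwise fun i _ => mem_univ (t i)
    _ ≤ ∑ _b : β, #{i | t i = a} := sum_le_sum fun b _ => h b
    _ = Fintype.card β * #{i | t i = a} := by simp

theorem stmt8
    (n' m : ℕ) (hm : 2 ≤ m)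
    (v : Fin n' → Fin m → ℝ)
    (σ : Fin n' → (Fin m ≃ Fin m))
    (hv0 : ∀ i a, 0 ≤ v i a)
    (hv1 : ∀ i, ∑ a, v i a = 1)
    (hcons : ∀ i a b, σ i a < σ i b → v i b ≤ v i a)
    (a : Fin m)
    (hplur : ∀ b : Fin m,
      (Finset.univ.filter fun i : Fin n' => (σ i).symm ⟨0, by omega⟩ = b).card ≤
        (Finset.univ.filter fun i : Fin n' => (σ i).symm ⟨0, by omega⟩ = a).card) :
    (n' : ℝ) / (m : ℝ) ^ 2 ≤ (∑ i, v i a) ∧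
    (∀ b, (∑ i, v i b) ≤ (n' : ℝ)) ∧
    (∀ b, (∑ i, v i b) ≤ (m : ℝ) ^ 2 * ∑ i, v i a) := by
  set top : Fin n' → Fin m := fun i => (σ i).symm ⟨0, by omega⟩
  set N := #{i | top i = a}
  have hm0 : (0 : ℝ) < m := by exact_mod_cast (by omega : 0 < m)
  have htop : ∀ i, 1 / (m : ℝ) ≤ v i (top i) := fun i => by
    simpa using one_div_card_le_of_forall_le (hv1 i)
      (le_apply_symm_of_isBot (σ i) (hcons i) (fun j => Nat.zero_le j.val))
  have hN : (n' : ℝ) ≤ m * N := by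
    have := card_le_card_mul_card_filter_of_forall_card_filter_le top a hplur
    simp only [Fintype.card_fin] at this
    exact_mod_cast this
  have hwinner : N * (1 / (m : ℝ)) ≤ ∑ i, v i a :=
    calc N * (1 / (m : ℝ)) ≤ ∑ i ∈ {i | top i = a}, v i a := by
          simpa using card_nsmul_le_sum {i | top i = a} (v · a) (1 / (m : ℝ))
            fun i hi => (mem_filter.mp hi).2 ▸ htop i
      _ ≤ ∑ i, v i a := sum_le_univ_sum_of_nonneg fun i => hv0 i a
  have hlower : (n' : ℝ) / m ^ 2 ≤ ∑ i, v i a := by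
    calc (n' : ℝ) / m ^ 2 ≤ m * N / m ^ 2 := by gcongr
      _ = N * (1 / (m : ℝ)) := by field_simp
      _ ≤ ∑ i, v i a := hwinner
  have hupper : ∀ b, ∑ i, v i b ≤ n' := fun b => by
    simpa using sum_le_card_nsmul univ (v · b) 1 fun i _ => le_one_of_sum_eq_one (hv0 i) (hv1 i) b
  refine ⟨hlower, hupper, fun b => ?_⟩
  calc ∑ i, v i b ≤ n' := hupper b
    _ = m ^ 2 * (n' / m ^ 2) := by field_simp
    _ ≤ m ^ 2 * ∑ i, v i a := by gcongr
end

section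
/- For all integers k ≥ 2, λ ≥ 1 and m ≥ k + 1, for every distributed mechanism (with possibly randomized in-district and over-districts rules, the winner always being one of the district representatives) whose in-district rule is unanimous, and for every real c < k, there exists a unit-sum instance with m alternatives and k symmetric districts of λ agents each on which max_{a∈A} SW(a) / E[SW(winner)] > c. In particular, the distortion of every randomized distributed mechanism with a unanimous in-district rule is Ω(k). -/
/-!
Every agent of district `d` values its own alternative `top d` at `1/2 + ε` and a common
alternative `star` at `1/2 - ε`. Unanimity makes `top d` the representative of district `d`,
so the winner is some `top d`, of welfare `λ (1/2 + ε)`, while `star` has welfare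
`k λ (1/2 - ε)`. The ratio `k (1/2 - ε) / (1/2 + ε)` tends to `k` as `ε → 0`.
-/

open Finset Filter Topology

lemma exists_pos_mul_half_add_lt {c k : ℝ} (hc : c < k) :
    ∃ ε : ℝ, 0 < ε ∧ ε ≤ 1 / 6 ∧ c * (1 / 2 + ε) < k * (1 / 2 - ε) := by
  have hlt : ∀ᶠ ε in 𝓝 (0 : ℝ), c * (1 / 2 + ε) < k * (1 / 2 - ε) :=
    ContinuousAt.eventually_lt (by fun_prop) (by fun_prop) (by linarith)
  have hle : ∀ᶠ ε in 𝓝 (0 : ℝ), ε ≤ 1 / 6 := eventually_le_nhds (by norm_num)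
  obtain ⟨ε, ⟨hεc, hε6⟩, hε0⟩ :=
    ((hlt.and hle).filter_mono nhdsWithin_le_nhds |>.and self_mem_nhdsWithin).exists
      (f := 𝓝[>] (0 : ℝ))
  exact ⟨ε, hε0, hε6, hεc⟩

section Distribution

variable {α : Type*} [Fintype α] {p : α → ℝ}

lemma eq_zero_of_apply_eq_one (h0 : ∀ a, 0 ≤ p a) (h1 : ∑ a, p a = 1) {a b : α}
    (ha : p a = 1) (hb : b ≠ a) : p b = 0 := by
  classical
  have hpair : p a + p b ≤ 1 := by
    rw [← h1, ← sum_pair hb.symm]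
    exact sum_le_univ_sum_of_nonneg h0
  linarith [h0 b]

lemma sum_mul_eq_of_ne_zero {f : α → ℝ} {C : ℝ} (h1 : ∑ a, p a = 1)
    (hf : ∀ a, p a ≠ 0 → f a = C) : ∑ a, p a * f a = C := by
  have hterm : ∀ a, p a * f a = p a * C := fun a => by
    by_cases ha : p a = 0
    · simp [ha]
    · rw [hf a ha]
  simp_rw [hterm, ← sum_mul, h1, one_mul]

end Distribution

section TwoPeakProfile

variable {ι κ α : Type*} [DecidableEq α]

noncomputable def twoPeakProfile (top : ι → α) (star : α) (ε : ℝ) : ι → κ → α → ℝ :=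
  fun d _ a => if a = top d then 1 / 2 + ε else if a = star then 1 / 2 - ε else 0

variable {top : ι → α} {star : α} {ε : ℝ}

lemma twoPeakProfile_nonneg (hε0 : 0 ≤ ε) (hε : ε ≤ 1 / 2) (d : ι) (i : κ) (a : α) :
    0 ≤ twoPeakProfile top star ε d i a := by
  unfold twoPeakProfile
  split_ifs <;> linarith

lemma twoPeakProfile_sum [Fintype α] (hstar : ∀ d, top d ≠ star) (d : ι) (i : κ) :
    ∑ a, twoPeakProfile top star ε d i a = 1 := by
  have hsplit : ∀ a, twoPeakProfile top star ε d i a =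
      (if a = top d then 1 / 2 + ε else 0) + (if a = star then 1 / 2 - ε else 0) := fun a => by
    unfold twoPeakProfile
    by_cases h : a = top d
    · simp [h, hstar d]
    · simp [h]
  simp_rw [hsplit, sum_add_distrib, sum_ite_eq', mem_univ, if_true]
  ring

lemma twoPeakProfile_lt_top (hε : 0 < ε) {d : ι} {i : κ} {b : α} (hb : b ≠ top d) :
    twoPeakProfile top star ε d i b < twoPeakProfile top star ε d i (top d) := by
  simp only [twoPeakProfile, if_neg hb]
  split_ifs <;> linarith

variable [Fintype ι] [Fintype κ]

def socialWelfare (v : ι → κ → α → ℝ) (a : α) : ℝ := ∑ d, ∑ i, v d i a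

lemma socialWelfare_twoPeakProfile_star (hstar : ∀ d, top d ≠ star) :
    socialWelfare (twoPeakProfile (κ := κ) top star ε) star =
      Fintype.card ι * (Fintype.card κ * (1 / 2 - ε)) := by
  simp [socialWelfare, twoPeakProfile, fun d => (hstar d).symm]
  ring

lemma socialWelfare_twoPeakProfile_top (htop : Function.Injective top)
    (hstar : ∀ d, top d ≠ star) (d₀ : ι) :
    socialWelfare (twoPeakProfile (κ := κ) top star ε) (top d₀) =
      Fintype.card κ * (1 / 2 + ε) := by
  simp only [socialWelfare, twoPeakProfile, if_neg (hstar d₀)]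
  rw [sum_eq_single d₀ (fun d _ hd => by simp [htop.ne (Ne.symm hd)]) (by simp)]
  simp
  ring

lemma socialWelfare_twoPeakProfile_of_ne {b : α} (hb : ∀ d, b ≠ top d) (hb' : b ≠ star) :
    socialWelfare (twoPeakProfile (κ := κ) top star ε) b = 0 := by
  simp [socialWelfare, twoPeakProfile, hb, hb']

lemma socialWelfare_twoPeakProfile_le_star (hε : ε ≤ 1 / 6)
    (hι : 2 ≤ Fintype.card ι) (htop : Function.Injective top) (hstar : ∀ d, top d ≠ star)
    (b : α) :
    socialWelfare (twoPeakProfile (κ := κ) top star ε) b ≤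
      socialWelfare (twoPeakProfile (κ := κ) top star ε) star := by
  have hκ : (0 : ℝ) ≤ Fintype.card κ := Nat.cast_nonneg _
  have hι' : (2 : ℝ) ≤ Fintype.card ι := by exact_mod_cast hι
  have hstar_nonneg : 0 ≤ (Fintype.card ι : ℝ) * (Fintype.card κ * (1 / 2 - ε)) := by
    have : 0 ≤ 1 / 2 - ε := by linarith
    positivity
  rw [socialWelfare_twoPeakProfile_star hstar]
  by_cases htb : ∃ d, b = top d
  · obtain ⟨d, rfl⟩ := htb
    rw [socialWelfare_twoPeakProfile_top htop hstar]
    -- `1/2 + ε ≤ 2 (1/2 - ε)` is exactly `ε ≤ 1/6`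
    have hcoef : 1 / 2 + ε ≤ Fintype.card ι * (1 / 2 - ε) := by nlinarith
    nlinarith
  · by_cases hbs : b = star
    · rw [hbs, socialWelfare_twoPeakProfile_star hstar]
    · simp only [not_exists] at htb
      rw [socialWelfare_twoPeakProfile_of_ne htb hbs]
      exact hstar_nonneg

end TwoPeakProfile

theorem stmt10
    (k lam m : ℕ) (hk : 2 ≤ k) (hlam : 1 ≤ lam) (hm : k + 1 ≤ m)
    (fin : (Fin lam → Fin m → ℝ) → Fin m → ℝ)
    (hfin0 : ∀ P a, 0 ≤ fin P a)
    (hfin1 : ∀ P, ∑ a, fin P a = 1)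
    (hfin_unan : ∀ (P : Fin lam → Fin m → ℝ) (a : Fin m),
      (∀ (i : Fin lam) (b : Fin m), b ≠ a → P i b < P i a) → fin P a = 1)
    (Mech : (Fin k → Fin lam → Fin m → ℝ) → Fin m → ℝ)
    (hM0 : ∀ v a, 0 ≤ Mech v a)
    (hM1 : ∀ v, ∑ a, Mech v a = 1)
    (hMrep : ∀ v a, 0 < Mech v a → ∃ d, 0 < fin (v d) a)
    (c : ℝ) (hc : c < k) :
    ∃ v : Fin k → Fin lam → Fin m → ℝ,
      (∀ d i a, 0 ≤ v d i a) ∧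
      (∀ d i, ∑ a, v d i a = 1) ∧
      ∃ a : Fin m,
        (∀ b : Fin m, (∑ d, ∑ i, v d i b) ≤ (∑ d, ∑ i, v d i a)) ∧
        c < (∑ d, ∑ i, v d i a) /
            (∑ b, Mech v b * (∑ d, ∑ i, v d i b)) := by
  obtain ⟨ε, hε0, hε6, hεc⟩ := exists_pos_mul_half_add_lt hc
  have hkm : k < m := by omega
  let top : Fin k → Fin m := Fin.castLE hkm.le
  let star : Fin m := ⟨k, hkm⟩
  have htop : Function.Injective top := Fin.castLE_injective _
  have hstar : ∀ d, top d ≠ star := fun d h => d.isLt.ne (congrArg Fin.val h)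
  let v : Fin k → Fin lam → Fin m → ℝ := twoPeakProfile top star ε
  have hrep : ∀ d, fin (v d) (top d) = 1 := fun d =>
    hfin_unan _ _ fun _ _ hb => twoPeakProfile_lt_top hε0 hb
  have hwin : ∀ b, Mech v b ≠ 0 → socialWelfare v b = lam * (1 / 2 + ε) := by
    intro b hb
    obtain ⟨d, hd⟩ := hMrep v b ((hM0 v b).lt_of_ne' hb)
    obtain rfl : b = top d := by_contra fun hne =>
      hd.ne' (eq_zero_of_apply_eq_one (hfin0 _) (hfin1 _) (hrep d) hne)
    simpa using socialWelfare_twoPeakProfile_top (κ := Fin lam) (ε := ε) htop hstar d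
  refine ⟨v, twoPeakProfile_nonneg hε0.le (by linarith), twoPeakProfile_sum hstar, star,
    socialWelfare_twoPeakProfile_le_star hε6 (by simpa using hk) htop hstar, ?_⟩
  change c < socialWelfare v star / ∑ b, Mech v b * socialWelfare v b
  have hlam' : (0 : ℝ) < lam := by exact_mod_cast hlam
  rw [sum_mul_eq_of_ne_zero (hM1 v) hwin, socialWelfare_twoPeakProfile_star hstar,
    lt_div_iff₀ (by positivity)]
  simp only [Fintype.card_fin]
  nlinarith
end

section
/- Let t ≥ 1 be an integer, k = t², λ ≥ 1, and m ≥ k + t. For every distributed mechanism whose in-district rule f_in is deterministic (possibly cardinal) and whose over-districts rule f_over is possibly randomized but always outputs one of the district representatives, there exists a unit-sum instance with m alternatives and k symmetric districts of λ agents each on which max_{a∈A} SW(a) / E[SW(winner)] ≥ t = √k. In particular, the distortion of every randomized distributed mechanism with a deterministic in-district rule is Ω(√k). -/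
/-!
Let every agent of a district split its value equally between two alternatives `a` and `b`. On
such a profile the in-district rule picks at most one of `a` and `b`, so "the rule does not pick
`a` against `b`" relates every pair of distinct alternatives, and counting degrees gives an `s`
rejected against `t` distinct opponents `g 0, …, g (t - 1)` as soon as `m ≥ 2t`. Split the
`t²` districts into `t` groups of `t` and let group `j` pair `s` with `g j`. Then `s` has welfare
`t²λ/2` but is no district's representative, while every other alternative lives in at most one
group and has welfare at most `tλ/2`.
-/

open Finset

section Tournament

variable {α : Type*} [Fintype α] [DecidableEq α] (R : α → α → Prop) [DecidableRel R]

/-- The out-degrees and the in-degrees have the same sum, and every point has total degree at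
least `card α - 1`. -/
theorem exists_card_le_two_mul_card_out_add_one [Nonempty α]
    (hR : ∀ a b, a ≠ b → R a b ∨ R b a) :
    ∃ s, Fintype.card α ≤ 2 * #{b | b ≠ s ∧ R s b} + 1 := by
  have hdeg : ∀ s, Fintype.card α - 1 ≤ #{b | b ≠ s ∧ R s b} + #{b | b ≠ s ∧ R b s} := by
    intro s
    have hcover : univ.erase s ⊆
        ({b | b ≠ s ∧ R s b} : Finset α) ∪ ({b | b ≠ s ∧ R b s} : Finset α) := by
      intro b hb
      have hbs := ne_of_mem_erase hb
      rcases hR s b hbs.symm with h | h <;> simp [hbs, h]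
    calc Fintype.card α - 1 = #(univ.erase s) := by rw [card_erase_of_mem (mem_univ s), card_univ]
      _ ≤ _ := (card_le_card hcover).trans (card_union_le _ _)
  have hin_eq_out : ∑ s, #{b | b ≠ s ∧ R b s} = ∑ s, #{b | b ≠ s ∧ R s b} := by
    simp only [card_filter]
    rw [sum_comm]
    exact sum_congr rfl fun _ _ => sum_congr rfl fun _ _ => if_congr (and_congr_left' ne_comm) rfl rfl
  have hsum : ∑ _s : α, (Fintype.card α - 1) ≤ ∑ s, 2 * #{b | b ≠ s ∧ R s b} :=
    calc ∑ _s : α, (Fintype.card α - 1)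
        ≤ ∑ s, (#{b | b ≠ s ∧ R s b} + #{b | b ≠ s ∧ R b s}) := sum_le_sum fun s _ => hdeg s
      _ = ∑ s, 2 * #{b | b ≠ s ∧ R s b} := by rw [sum_add_distrib, hin_eq_out, ← mul_sum]; ring
  obtain ⟨s, -, hs⟩ := exists_le_of_sum_le univ_nonempty hsum
  exact ⟨s, by omega⟩

theorem exists_embedding_forall_ne_and_rel {t : ℕ} (ht : 1 ≤ t) (hcard : 2 * t ≤ Fintype.card α)
    (hR : ∀ a b, a ≠ b → R a b ∨ R b a) :
    ∃ s, ∃ g : Fin t ↪ α, ∀ j, g j ≠ s ∧ R s (g j) := by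
  have : Nonempty α := Fintype.card_pos_iff.mp (by omega)
  obtain ⟨s, hs⟩ := exists_card_le_two_mul_card_out_add_one R hR
  obtain ⟨g, hg⟩ := Function.Embedding.exists_of_card_le_finset
    (α := Fin t) (s := {b | b ≠ s ∧ R s b}) (by rw [Fintype.card_fin]; omega)
  exact ⟨s, g, fun j => by simpa using hg (Set.mem_range_self j)⟩

end Tournament

section PairValuation

variable {α : Type*} [DecidableEq α]

noncomputable def pairValuation (a b : α) : α → ℝ := Pi.single a (1 / 2) + Pi.single b (1 / 2)

theorem pairValuation_comm (a b : α) : pairValuation a b = pairValuation b a := add_comm _ _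

theorem pairValuation_nonneg (a b c : α) : 0 ≤ pairValuation a b c := by
  simp only [pairValuation, Pi.add_apply, Pi.single_apply]; split_ifs <;> norm_num

theorem sum_pairValuation [Fintype α] (a b : α) : ∑ c, pairValuation a b c = 1 := by
  simp only [pairValuation, Pi.add_apply, sum_add_distrib, sum_pi_single', mem_univ, if_true]
  norm_num

theorem pairValuation_apply_left {a b : α} (h : b ≠ a) : pairValuation a b a = 1 / 2 := by
  simp [pairValuation, h]

theorem pairValuation_apply_of_ne_left {a c : α} (b : α) (h : c ≠ a) :
    pairValuation a b c = (Pi.single b (1 / 2) : α → ℝ) c := by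
  simp [pairValuation, h]

end PairValuation

theorem sum_pi_single_embedding_apply_le {ι α : Type*} [Fintype ι] [Fintype α] [DecidableEq α]
    (g : ι ↪ α) {x : ℝ} (hx : 0 ≤ x) (c : α) : ∑ j, (Pi.single (g j) x : α → ℝ) c ≤ x :=
  calc ∑ j, (Pi.single (g j) x : α → ℝ) c = ∑ a ∈ univ.map g, Pi.single a x c :=
        (sum_map univ g fun a => (Pi.single a x : α → ℝ) c).symm
    _ ≤ ∑ a, Pi.single a x c := sum_le_univ_sum_of_nonneg fun a =>
        (Pi.single_nonneg.mpr hx : (0 : α → ℝ) ≤ Pi.single a x) c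
    _ = x := by simp [sum_pi_single]

theorem sum_divNat {M : Type*} [AddCommMonoid M] {m n : ℕ} (f : Fin m → M) :
    ∑ d : Fin (m * n), f d.divNat = n • ∑ j, f j :=
  calc ∑ d : Fin (m * n), f d.divNat = ∑ d : Fin (m * n), f (finProdFinEquiv.symm d).1 := by
        simp only [finProdFinEquiv_symm_apply]
    _ = ∑ p : Fin m × Fin n, f p.1 := finProdFinEquiv.symm.sum_comp fun p => f p.1
    _ = n • ∑ j, f j := by simp [Fintype.sum_prod_type, sum_nsmul]

theorem sum_mul_le_of_le_of_pos {α : Type*} [Fintype α] {p f : α → ℝ} {B : ℝ}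
    (hp0 : ∀ a, 0 ≤ p a) (hp1 : ∑ a, p a = 1) (hB : ∀ a, 0 < p a → f a ≤ B) :
    ∑ a, p a * f a ≤ B :=
  calc ∑ a, p a * f a ≤ ∑ a, p a * B := sum_le_sum fun a _ => by
        rcases (hp0 a).eq_or_lt with h | h
        · simp [← h]
        · exact mul_le_mul_of_nonneg_left (hB a h) h.le
    _ = B := by rw [← sum_mul, hp1, one_mul]

theorem exists_embedding_rule_pairValuation_ne {α ι : Type*} [Fintype α] [DecidableEq α]
    (rule : (ι → α → ℝ) → α) {t : ℕ} (ht : 1 ≤ t) (hcard : 2 * t ≤ Fintype.card α) :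
    ∃ s, ∃ g : Fin t ↪ α, ∀ j, g j ≠ s ∧ rule (fun _ => pairValuation s (g j)) ≠ s := by
  classical
  refine exists_embedding_forall_ne_and_rel (fun a b => rule (fun _ => pairValuation a b) ≠ a)
    ht hcard fun a b hab => ?_
  by_contra! h
  rw [pairValuation_comm] at h
  exact hab (h.1.symm.trans h.2)

section HardInstance

variable {α ι : Type*} [DecidableEq α] [Fintype ι] {t : ℕ} (s : α) (g : Fin t ↪ α)

noncomputable def hardInstance : Fin (t * t) → ι → α → ℝ :=
  fun d _ => pairValuation s (g d.divNat)

theorem sum_sum_hardInstance (c : α) :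
    ∑ d, ∑ i, hardInstance (ι := ι) s g d i c =
      Fintype.card ι * (t * ∑ j, pairValuation s (g j) c) := by
  simp only [hardInstance, sum_const, card_univ, nsmul_eq_mul, ← mul_sum]
  rw [sum_divNat fun j => pairValuation s (g j) c, nsmul_eq_mul]

theorem sum_sum_hardInstance_self (hg : ∀ j, g j ≠ s) :
    ∑ d, ∑ i, hardInstance (ι := ι) s g d i s = Fintype.card ι * (t * (t / 2)) := by
  simp [sum_sum_hardInstance, pairValuation_apply_left (hg _), div_eq_mul_inv]

theorem sum_sum_hardInstance_le [Fintype α] {c : α} (hc : c ≠ s) :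
    ∑ d, ∑ i, hardInstance (ι := ι) s g d i c ≤ Fintype.card ι * (t * (1 / 2)) := by
  rw [sum_sum_hardInstance]
  simp only [pairValuation_apply_of_ne_left _ hc]
  gcongr
  exact sum_pi_single_embedding_apply_le g (by norm_num) c

end HardInstance

theorem stmt11_general
    (t lam m : ℕ) (ht : 1 ≤ t) (hm : t * t + t ≤ m)
    (fin : (Fin lam → Fin m → ℝ) → Fin m)
    (fover : (Fin (t * t) → Fin m) → Fin m → ℝ)
    (hfover0 : ∀ reps a, 0 ≤ fover reps a)
    (hfover1 : ∀ reps, ∑ a, fover reps a = 1)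
    (hfover_rep : ∀ reps a, 0 < fover reps a → ∃ d, reps d = a) :
    ∃ v : Fin (t * t) → Fin lam → Fin m → ℝ,
      (∀ d i a, 0 ≤ v d i a) ∧
      (∀ d i, ∑ a, v d i a = 1) ∧
      ∃ a : Fin m,
        (∀ b : Fin m, (∑ d, ∑ i, v d i b) ≤ (∑ d, ∑ i, v d i a)) ∧
        (t : ℝ) * (∑ b, fover (fun d => fin (v d)) b * (∑ d, ∑ i, v d i b)) ≤
          (∑ d, ∑ i, v d i a) := by
  obtain ⟨s, g, hg⟩ := exists_embedding_rule_pairValuation_ne fin ht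
    (by rw [Fintype.card_fin]; nlinarith)
  have hself := sum_sum_hardInstance_self (ι := Fin lam) s g fun j => (hg j).1
  have hother : ∀ c ≠ s, ∑ d, ∑ i, hardInstance (ι := Fin lam) s g d i c ≤ lam * (t * (1 / 2)) :=
    fun c hc => by simpa using sum_sum_hardInstance_le (ι := Fin lam) s g hc
  have hexp : ∑ b, fover (fun d => fin (hardInstance s g d)) b *
      ∑ d, ∑ i, hardInstance s g d i b ≤ lam * (t * (1 / 2)) :=
    sum_mul_le_of_le_of_pos (hfover0 _) (hfover1 _) fun b hb => hother b <| by
      obtain ⟨d, rfl⟩ := hfover_rep _ b hb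
      exact (hg d.divNat).2
  simp only [Fintype.card_fin] at hself
  refine ⟨hardInstance s g, fun d i c => pairValuation_nonneg _ _ c,
    fun d i => sum_pairValuation _ _, s, fun b => ?_, ?_⟩
  · rcases eq_or_ne b s with rfl | hb
    · exact le_rfl
    · rw [hself]
      exact (hother b hb).trans (by gcongr; exact_mod_cast ht)
  · rw [hself]
    calc (t : ℝ) * _ ≤ t * (lam * (t * (1 / 2))) := by gcongr
      _ = lam * (t * (t / 2)) := by ring

theorem stmt11
    (t lam m : ℕ) (ht : 1 ≤ t) (hlam : 1 ≤ lam) (hm : t * t + t ≤ m)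
    (fin : (Fin lam → Fin m → ℝ) → Fin m)
    (fover : (Fin (t * t) → Fin m) → Fin m → ℝ)
    (hfover0 : ∀ reps a, 0 ≤ fover reps a)
    (hfover1 : ∀ reps, ∑ a, fover reps a = 1)
    (hfover_rep : ∀ reps a, 0 < fover reps a → ∃ d, reps d = a) :
    ∃ v : Fin (t * t) → Fin lam → Fin m → ℝ,
      (∀ d i a, 0 ≤ v d i a) ∧
      (∀ d i, ∑ a, v d i a = 1) ∧
      ∃ a : Fin m,
        (∀ b : Fin m, (∑ d, ∑ i, v d i b) ≤ (∑ d, ∑ i, v d i a)) ∧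
        (t : ℝ) * (∑ b, fover (fun d => fin (v d)) b * (∑ d, ∑ i, v d i b)) ≤
          (∑ d, ∑ i, v d i a) :=
  stmt11_general t lam m ht hm fin fover hfover0 hfover1 hfover_rep
end

section
/- Let k ≥ 1, let m be even with m/2 ≥ k and with 2λ/m a positive integer, and fix a linear order ≻ on the set A of m alternatives. Consider any distributed mechanism whose in-district rule f_in is deterministic and ordinal and always selects, from each district, the ≻-greatest among the alternatives ranked first by at least one agent of the district, and whose over-districts rule f_over is an arbitrary (possibly randomized) rule outputting one of the district representatives. Then there exists a unit-sum instance with k symmetric districts of λ agents each on which max_{a∈A} SW(a) / E[SW(winner)] ≥ k·m·(m-2)/4. In particular, the distortion of any ordinal distributed mechanism with a deterministic in-district rule that breaks ties according to a fixed ordering of the alternatives is Ω(km²). -/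
/-!
Order the alternatives by priority, `0` being the `≻`-greatest, let `x d` have priority `d < k`
and let `last` be the `≻`-least alternative. In district `d`, `s` agents rank `x d` first and spread
their unit value evenly over `x d` and the `2h - k` alternatives of priority `≥ k`, so they value
every other `x d'` at `0`; the remaining `(h - 1) s` agents put all their value on `last`. The tops in
district `d` are `x d` and `last`, so tie-breaking elects `x d`, whose welfare is `s / (2h - k + 1)`
whatever `f_over` does. Meanwhile `last` is valued maximally by every agent and has welfare
`k (s / (2h - k + 1) + (h - 1) s) ≥ k h (h - 1) · s / (2h - k + 1)`.
-/

open Finset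

theorem sum_range_ite_lt {M : Type*} [AddCommMonoid M] {n t : ℕ} (ht : t ≤ n) (x y : M) :
    ∑ i ∈ range n, (if i < t then x else y) = t • x + (n - t) • y := by
  rw [← sum_range_add_sum_Ico _ ht]
  congr 1
  · rw [sum_congr rfl fun i hi => if_pos (mem_range.mp hi), sum_const, card_range]
  · rw [sum_congr rfl fun i hi => if_neg (mem_Ico.mp hi).1.not_gt, sum_const, Nat.card_Ico]

theorem sum_mul_le_of_pos_imp_le {ι : Type*} [Fintype ι] {p f : ι → ℝ} {B : ℝ}
    (hp0 : ∀ i, 0 ≤ p i) (hp1 : ∑ i, p i = 1) (hf : ∀ i, 0 < p i → f i ≤ B) :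
    ∑ i, p i * f i ≤ B :=
  calc ∑ i, p i * f i ≤ ∑ i, p i * B := sum_le_sum fun i _ =>
        (hp0 i).eq_or_lt.elim (fun h => by simp [← h])
          fun h => mul_le_mul_of_nonneg_left (hf i h) h.le
    _ = B := by rw [← sum_mul, hp1, one_mul]

namespace TieBreakingLowerBound

variable {n : ℕ}

def IsTop {α : Type*} (σ : α ≃ Fin n) (a : α) : Prop := ∀ b, b ≠ a → σ a < σ b

theorem IsTop.unique {α : Type*} {σ : α ≃ Fin n} {a b : α} (ha : IsTop σ a)
    (hb : IsTop σ b) : a = b :=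
  by_contra fun hab => lt_asymm (ha b (Ne.symm hab)) (hb a hab)

/-- Sort by decreasing value, breaking ties in favour of `a`. -/
theorem exists_perm_top_antitone {β : Type*} [LinearOrder β] (v : Fin n → β) (a : Fin n)
    (ha : ∀ b, v b ≤ v a) :
    ∃ σ : Fin n ≃ Fin n, IsTop σ a ∧ ∀ b c, σ b < σ c → v c ≤ v b := by
  let key : Fin n → βᵒᵈ ×ₗ Bool := fun b => toLex (OrderDual.toDual (v b), decide (b ≠ a))
  let σ := (Tuple.sort key).symm
  have key_mono : ∀ b c, σ b ≤ σ c → key b ≤ key c :=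
    fun b c h => by simpa [σ] using Tuple.monotone_sort key h
  refine ⟨σ, fun b hb => lt_of_not_ge fun hba => ?_,
    fun b c hbc => Prod.Lex.monotone_fst _ _ (key_mono b c hbc.le)⟩
  have : key a < key b := Prod.Lex.toLex_lt_toLex.mpr (by
    rcases (ha b).lt_or_eq with h | h
    · exact Or.inl h
    · exact Or.inr ⟨h.symm, by simp [hb]⟩)
  exact (key_mono b a hba).not_gt this

theorem rule_eq_of_isTop {m : ℕ} (pri : Fin m → Fin m) (fin : (Fin n → Fin m ≃ Fin m) → Fin m)
    (hfin : ∀ (P : Fin n → Fin m ≃ Fin m) (a : Fin m), (∃ i, IsTop (P i) a) →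
      (∀ b, (∃ i, IsTop (P i) b) → pri a ≤ pri b) → fin P = a)
    {P : Fin n → Fin m ≃ Fin m} {top : Fin n → Fin m} (htop : ∀ i, IsTop (P i) (top i))
    {i₀ : Fin n} (hi₀ : ∀ i, pri (top i₀) ≤ pri (top i)) : fin P = top i₀ :=
  hfin P (top i₀) ⟨i₀, htop i₀⟩ fun _ ⟨i, hb⟩ => hb.unique (htop i) ▸ hi₀ i

section Instance

variable (k h s : ℕ)

noncomputable def share : ℝ := (2 * h - k + 1 : ℝ)⁻¹

noncomputable def spread (d j : ℕ) : ℝ :=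
  (if j = d then share k h else 0) + (if j < k then 0 else share k h)

def focused (j : ℕ) : ℝ := if j = 2 * h - 1 then 1 else 0

/-- `j` is the priority of an alternative, not the alternative itself. -/
noncomputable def valuation (d i j : ℕ) : ℝ := if i < s then spread k h d j else focused h j

noncomputable def welfare (j : ℕ) : ℝ :=
  ∑ d : Fin k, ∑ i : Fin (h * s), valuation k h s d i j

variable {k h s}

theorem share_pos (hkh : k ≤ h) : 0 < share k h := by
  have : (k : ℝ) ≤ h := by exact_mod_cast hkh
  exact inv_pos.mpr (by linarith)

theorem share_mul_eq_one (hkh : k ≤ h) : share k h * (2 * h - k + 1) = 1 :=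
  inv_mul_cancel₀ (inv_pos.mp (share_pos hkh)).ne'

theorem valuation_nonneg (hkh : k ≤ h) (d i j : ℕ) : 0 ≤ valuation k h s d i j := by
  have := share_pos hkh
  unfold valuation spread focused; split_ifs <;> linarith

theorem valuation_le_of_lt (hkh : k ≤ h) {d i : ℕ} (hd : d < k) (hi : i < s) (j : ℕ) :
    valuation k h s d i j ≤ valuation k h s d i d := by
  have := share_pos hkh
  unfold valuation spread; split_ifs <;> first | omega | linarith

theorem valuation_le_last (hkh : k ≤ h) {d : ℕ} (hd : d < k) (i j : ℕ) :
    valuation k h s d i j ≤ valuation k h s d i (2 * h - 1) := by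
  have := share_pos hkh
  unfold valuation spread focused; split_ifs <;> first | omega | linarith

theorem sum_valuation (hkh : k ≤ h) {d : ℕ} (hd : d < k) (i : ℕ) :
    ∑ j : Fin (2 * h), valuation k h s d i j = 1 := by
  rw [Fin.sum_univ_eq_sum_range (valuation k h s d i)]
  unfold valuation
  split_ifs
  · simp only [spread, sum_add_distrib, sum_ite_eq', mem_range, if_pos (show d < 2 * h by omega),
      sum_range_ite_lt (show k ≤ 2 * h by omega), smul_zero, zero_add, nsmul_eq_mul]
    push_cast [show k ≤ 2 * h by omega]
    linear_combination share_mul_eq_one hkh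
  · simp [focused, sum_ite_eq', show 2 * h - 1 < 2 * h by omega]

theorem sum_valuation_agents (d j : ℕ) (hs : s ≤ h * s) :
    ∑ i : Fin (h * s), valuation k h s d i j =
      s * spread k h d j + (h * s - s : ℕ) * focused h j := by
  rw [Fin.sum_univ_eq_sum_range (fun i => valuation k h s d i j)]
  simp only [valuation, sum_range_ite_lt hs, nsmul_eq_mul]

theorem welfare_last (hkh : k ≤ h) (hs : s ≤ h * s) :
    welfare k h s (2 * h - 1) = k * (s * share k h + (h * s - s : ℕ)) := by
  have spread_last : ∀ d : Fin k, spread k h d (2 * h - 1) = share k h := fun d => by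
    simp only [spread]; split_ifs <;> first | omega | simp
  simp [welfare, sum_valuation_agents _ _ hs, spread_last, focused, mul_add]

theorem welfare_of_lt (hkh : k ≤ h) (hs : s ≤ h * s) (e : Fin k) :
    welfare k h s e = s * share k h := by
  have spread_eq : ∀ d : Fin k, spread k h d e = if e = d then share k h else 0 := fun d => by
    simp only [spread, Fin.val_inj, if_pos e.isLt, add_zero]
  have focused_eq : focused h e = 0 := if_neg (by omega)
  simp [welfare, sum_valuation_agents _ _ hs, spread_eq, focused_eq]

theorem welfare_le_last (hkh : k ≤ h) (j : ℕ) : welfare k h s j ≤ welfare k h s (2 * h - 1) :=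
  sum_le_sum fun d _ => sum_le_sum fun i _ => valuation_le_last hkh d.isLt i j

theorem mul_le_welfare_last (hk : 1 ≤ k) (hkh : k ≤ h) (hs : s ≤ h * s) {E : ℝ}
    (hE : E ≤ s * share k h) :
    (k : ℝ) * (2 * (h : ℝ)) * (2 * (h : ℝ) - 2) / 4 * E ≤ welfare k h s (2 * h - 1) := by
  have hk' : (1 : ℝ) ≤ k := by exact_mod_cast hk
  have hkh' : (k : ℝ) ≤ h := by exact_mod_cast hkh
  have hK : (0 : ℝ) ≤ k * (2 * h) * (2 * h - 2) / 4 := by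
    have : (0 : ℝ) ≤ 2 * h - 2 := by linarith
    positivity
  refine (mul_le_mul_of_nonneg_left hE hK).trans ?_
  rw [welfare_last hkh hs, Nat.cast_sub hs, Nat.cast_mul, ← sub_nonneg]
  calc (0 : ℝ) ≤ k * s * share k h * (1 + (h - 1) * (h - k + 1)) := by
        have := share_pos hkh
        have : (0 : ℝ) ≤ (h - 1) * (h - k + 1) := mul_nonneg (by linarith) (by linarith)
        positivity
    _ = _ := by linear_combination (k * s * (h - 1) : ℝ) * share_mul_eq_one hkh

end Instance

end TieBreakingLowerBound

open TieBreakingLowerBound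

theorem stmt12
    (k h s : ℕ) (hk : 1 ≤ k) (hkh : k ≤ h) (hs : 1 ≤ s)
    (pri : Fin (2 * h) → Fin (2 * h)) (hpri : Function.Injective pri)
    (fin : (Fin (h * s) → (Fin (2 * h) ≃ Fin (2 * h))) → Fin (2 * h))
    (hfin : ∀ (P : Fin (h * s) → (Fin (2 * h) ≃ Fin (2 * h))) (a : Fin (2 * h)),
      (∃ i, ∀ b, b ≠ a → P i a < P i b) →
      (∀ b : Fin (2 * h), (∃ i, ∀ c, c ≠ b → P i b < P i c) → pri a ≤ pri b) →
      fin P = a)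
    (fover : (Fin k → Fin (2 * h)) → Fin (2 * h) → ℝ)
    (hfover0 : ∀ reps a, 0 ≤ fover reps a)
    (hfover1 : ∀ reps, ∑ a, fover reps a = 1)
    (hfover_rep : ∀ reps a, 0 < fover reps a → ∃ d, reps d = a) :
    ∃ (σ : Fin k → Fin (h * s) → (Fin (2 * h) ≃ Fin (2 * h)))
      (v : Fin k → Fin (h * s) → Fin (2 * h) → ℝ),
      (∀ d i a, 0 ≤ v d i a) ∧
      (∀ d i, ∑ a, v d i a = 1) ∧
      (∀ d i a b, σ d i a < σ d i b → v d i b ≤ v d i a) ∧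
      ∃ a : Fin (2 * h),
        (∀ b, (∑ d, ∑ i, v d i b) ≤ (∑ d, ∑ i, v d i a)) ∧
        (k : ℝ) * (2 * (h : ℝ)) * (2 * (h : ℝ) - 2) / 4 *
            (∑ b, fover (fun d => fin (σ d)) b * (∑ d, ∑ i, v d i b)) ≤
          (∑ d, ∑ i, v d i a) := by
  have hsh : s ≤ h * s := Nat.le_mul_of_pos_left s (by omega)
  let e := Equiv.ofBijective pri hpri.bijective_of_finite
  let x (d : Fin k) : Fin (2 * h) := e.symm ⟨d, by omega⟩
  let last : Fin (2 * h) := e.symm ⟨2 * h - 1, by omega⟩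
  have hx (d : Fin k) : (pri (x d) : ℕ) = d := congrArg Fin.val (e.apply_symm_apply _)
  have hlast : (pri last : ℕ) = 2 * h - 1 := congrArg Fin.val (e.apply_symm_apply _)
  let v (d : Fin k) (i : Fin (h * s)) (a : Fin (2 * h)) : ℝ := valuation k h s d i (pri a)
  let top (d : Fin k) (i : Fin (h * s)) : Fin (2 * h) := if (i : ℕ) < s then x d else last
  have hv_top (d i b) : v d i b ≤ v d i (top d i) := by
    by_cases hi : (i : ℕ) < s
    · simpa [v, top, hi, hx] using valuation_le_of_lt hkh d.isLt hi (pri b)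
    · simpa [v, top, hi, hlast] using valuation_le_last hkh d.isLt i (pri b)
  choose σ hσtop hσv using fun d i => exists_perm_top_antitone (v d i) (top d i) (hv_top d i)
  have hreps : (fun d => fin (σ d)) = x := funext fun d => by
    have htop0 : top d ⟨0, hs.trans hsh⟩ = x d := if_pos hs
    refine htop0 ▸ rule_eq_of_isTop pri fin hfin (hσtop d) fun i => ?_
    rw [htop0, Fin.le_def, hx]
    by_cases hi : (i : ℕ) < s <;> simp only [top, hi, if_true, if_false, hx, hlast] <;> omega
  have hwelfare_last : ∑ d, ∑ i, v d i last = welfare k h s (2 * h - 1) := hlast ▸ rfl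
  refine ⟨σ, v, fun d i a => valuation_nonneg hkh d i _, fun d i => ?_, hσv, last,
    fun b => hwelfare_last ▸ welfare_le_last hkh _, ?_⟩
  · exact (e.sum_comp fun j : Fin (2 * h) => valuation k h s d i j).trans
      (sum_valuation hkh d.isLt i)
  · rw [hreps, hwelfare_last]
    refine mul_le_welfare_last hk hkh hsh (sum_mul_le_of_pos_imp_le (hfover0 x) (hfover1 x)
      fun b hb => ?_)
    obtain ⟨d, rfl⟩ := hfover_rep x b hb
    exact ((congrArg (welfare k h s) (hx d)).trans (welfare_of_lt hkh hsh d)).le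
end
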